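/- arXiv:2409.19229 — 3 statements merged into one kernel-verified Lean document; each statement's English description precedes it below -/
import Mathlib

section
/- Let α be a well-ordered type (a linear order whose strict order is well-founded) and let G be a countable linearly ordered group whose underlying linear order is order-isomorphic to the lexicographic product ℤ^α·ℚ (ℚ-coordinate dominant). Then there exists a set S of Archimedean equivalence classes of non-identity elements of G such that S is downward closed with respect to the induced order ≪ on classes and S, ordered by ≪, is order-isomorphic to α. In particular, the largest well-ordered initial segment of the order of Archimedean classes of non-identity elements of G has order type β ≥ α. -/
/-- `|g| = g` if `g ≥ e`, and `|g| = g⁻¹` otherwise. -/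
def oabs {G : Type*} [Group G] [LinearOrder G] (g : G) : G :=
  if 1 ≤ g then g else g⁻¹

/-- `g` is Archimedean less than `h`: `|gⁿ| < |h|` for every natural number `n`. -/
def ArchLT {G : Type*} [Group G] [LinearOrder G] (g h : G) : Prop :=
  ∀ n : ℕ, oabs (g ^ n) < oabs h

/-- `g` and `h` are Archimedean equivalent: there are `n, m` with
`|gⁿ| ≥ |h|` and `|hᵐ| ≥ |g|`. -/
def ArchEquiv {G : Type*} [Group G] [LinearOrder G] (g h : G) : Prop :=
  ∃ n m : ℕ, oabs h ≤ oabs (g ^ n) ∧ oabs g ≤ oabs (h ^ m)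

/-- Archimedean equivalence classes of the non-identity elements of `G`. -/
def NzArchClasses (G : Type*) [Group G] [LinearOrder G] :=
  Quot (fun g h : {x : G // x ≠ 1} => ArchEquiv g.1 h.1)

/-- The relation induced by `≪` on the Archimedean classes of non-identity elements. -/
def NzArchClassLT {G : Type*} [Group G] [LinearOrder G]
    (a b : NzArchClasses G) : Prop :=
  ∃ g h : {x : G // x ≠ 1}, a = Quot.mk _ g ∧ b = Quot.mk _ h ∧ ArchLT g.1 h.1

/-- `ℤ^X`, the order on finitely supported functions `X → ℤ` determined by the maximum
point of disagreement: `f < g` iff `f x < g x` where `x` is maximal with `f x ≠ g x`. -/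
def FinsuppLT {X : Type*} (r : X → X → Prop) (f g : X →₀ ℤ) : Prop :=
  ∃ x : X, f x < g x ∧ ∀ y : X, r x y → f y = g y

/-- The lexicographic product `A·B` with the `B`-coordinate dominant:
`⟨a₀,b₀⟩ < ⟨a₁,b₁⟩` iff `b₀ < b₁`, or `b₀ = b₁` and `a₀ < a₁`. -/
def ProdDomLT {A B : Type*} (rA : A → A → Prop) (rB : B → B → Prop)
    (p q : A × B) : Prop :=
  rB p.2 q.2 ∨ (p.2 = q.2 ∧ rA p.1 q.1)

/-!
For an upper set `P ⊆ α`, call `p, q ∈ ℤ^α·ℚ` `P`-close (`AgreeOn P p q`) when they have the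
same `ℚ`-coordinate and agree on `P`. These relations are determined by the order alone: `p, q`
are `(x, ∞)`-close iff the interval between them meets only finitely many `[x, ∞)`-closeness
classes, and `[x, ∞)`-closeness is equality or `(y, ∞)`-closeness for some `y < x`. By
well-founded induction on `x`, every `P`-closeness is invariant under order automorphisms, so,
transported to `G`, the elements `P`-close to `1` form a convex subgroup (left translations are
order automorphisms).

A non-identity element with the `ℚ`-coordinate of `1` has a level: the largest coordinate at
which it differs from `1`. Lower level means Archimedean smaller, by convexity; equal level means
Archimedean equivalent, since each power moves the level coordinate by at least one. So sending
`x` to the class of level `x` identifies `α` with a downward closed set of classes.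
-/

open Set

section FiniteCondensation

variable {β : Type*} (r : β → β → Prop)

def IsBetween (p q z : β) : Prop := ¬ r z p ∧ ¬ r q z

def FinCondensed (R : β → β → Prop) (p q : β) : Prop :=
  ∃ s : Finset β, ∀ z, IsBetween r p q z ∨ IsBetween r q p z → ∃ w ∈ s, R z w

def IsAutInvariant (R : β → β → Prop) : Prop :=
  ∀ (ψ : r ≃r r) (p q : β), R p q → R (ψ p) (ψ q)

variable {r}

theorem isBetween_map_iff (ψ : r ≃r r) {p q z : β} :
    IsBetween r (ψ p) (ψ q) (ψ z) ↔ IsBetween r p q z := by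
  simp only [IsBetween, ψ.map_rel_iff]

theorem FinCondensed.symm {R : β → β → Prop} {p q : β} (h : FinCondensed r R p q) :
    FinCondensed r R q p :=
  let ⟨s, hs⟩ := h
  ⟨s, fun z hz => hs z hz.symm⟩

theorem IsAutInvariant.finCondensed {R : β → β → Prop} (hR : IsAutInvariant r R) :
    IsAutInvariant r (FinCondensed r R) := by
  classical
  rintro ψ p q ⟨s, hs⟩
  refine ⟨s.image ψ, fun z hz => ?_⟩
  have hz' : IsBetween r p q (ψ.symm z) ∨ IsBetween r q p (ψ.symm z) := by
    rw [← ψ.apply_symm_apply z, isBetween_map_iff, isBetween_map_iff] at hz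
    exact hz
  obtain ⟨w, hw, hzw⟩ := hs _ hz'
  exact ⟨ψ w, Finset.mem_image_of_mem ψ hw, by simpa using hR ψ _ _ hzw⟩

theorem not_finCondensed_of_pairwise {R : β → β → Prop} (hR : Equivalence R) {p q : β}
    (z : ℕ → β) (hz : ∀ k, IsBetween r p q (z k)) (hne : Pairwise fun j k => ¬ R (z j) (z k)) :
    ¬ FinCondensed r R p q := by
  rintro ⟨s, hs⟩
  choose w hws hzw using fun k => hs (z k) (Or.inl (hz k))
  obtain ⟨j, k, hjk, he⟩ :=
    Finite.exists_ne_map_eq_of_infinite fun k => (⟨w k, hws k⟩ : s)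
  have hw : w j = w k := congrArg Subtype.val he
  exact hne hjk (hR.trans (hzw j) (hw ▸ hR.symm (hzw k)))

end FiniteCondensation

abbrev ZPowRat (α : Type*) := (α →₀ ℤ) × ℚ

def ZPowRatLT (α : Type*) [LinearOrder α] : ZPowRat α → ZPowRat α → Prop :=
  ProdDomLT (FinsuppLT ((· < ·) : α → α → Prop)) ((· < ·) : ℚ → ℚ → Prop)

namespace ZPowRat

variable {α : Type*}

def AgreeOn (P : Set α) (p q : ZPowRat α) : Prop :=
  p.2 = q.2 ∧ ∀ y ∈ P, p.1 y = q.1 y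

namespace AgreeOn

variable {P Q : Set α} {p q z : ZPowRat α}

theorem refl (P : Set α) (p : ZPowRat α) : AgreeOn P p p := ⟨rfl, fun _ _ => rfl⟩

theorem symm (h : AgreeOn P p q) : AgreeOn P q p := ⟨h.1.symm, fun y hy => (h.2 y hy).symm⟩

theorem trans (h : AgreeOn P p q) (h' : AgreeOn P q z) : AgreeOn P p z :=
  ⟨h.1.trans h'.1, fun y hy => (h.2 y hy).trans (h'.2 y hy)⟩

theorem mono (h : AgreeOn P p q) (hQP : Q ⊆ P) : AgreeOn Q p q :=
  ⟨h.1, fun y hy => h.2 y (hQP hy)⟩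

end AgreeOn

theorem agreeOn_equivalence (P : Set α) : Equivalence (AgreeOn P) :=
  ⟨AgreeOn.refl P, AgreeOn.symm, AgreeOn.trans⟩

variable [LinearOrder α]

local infix:50 " ≺ " => ZPowRatLT _

theorem exists_max_ne {P : Set α} {f g : α →₀ ℤ} (h : ∃ y ∈ P, f y ≠ g y) :
    ∃ x ∈ P, f x ≠ g x ∧ ∀ y ∈ P, x < y → f y = g y := by
  classical
  set s := (f - g).support.filter (· ∈ P)
  have hs : ∀ y, y ∈ s ↔ y ∈ P ∧ f y ≠ g y := by
    simp [s, sub_eq_zero, and_comm]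
  obtain ⟨y, hyP, hy⟩ := h
  have hne : s.Nonempty := ⟨y, (hs y).2 ⟨hyP, hy⟩⟩
  obtain ⟨hxP, hx⟩ := (hs _).1 (s.max'_mem hne)
  refine ⟨s.max' hne, hxP, hx, fun z hzP hlt => ?_⟩
  by_contra hz
  exact (s.le_max' z ((hs z).2 ⟨hzP, hz⟩)).not_gt hlt

theorem exists_max_ne_of_ne {f g : α →₀ ℤ} (h : f ≠ g) :
    ∃ x, f x ≠ g x ∧ ∀ y, x < y → f y = g y := by
  obtain ⟨y, hy⟩ := DFunLike.ne_iff.1 h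
  obtain ⟨x, -, hx, hmax⟩ := exists_max_ne (P := univ) ⟨y, trivial, hy⟩
  exact ⟨x, hx, fun y => hmax y trivial⟩

theorem lt_asymm {p q : ZPowRat α} (h : p ≺ q) : ¬ q ≺ p := by
  rintro h'
  rcases h with h | ⟨he, x, hx, hag⟩ <;> rcases h' with h' | ⟨he', y, hy, hag'⟩
  · exact _root_.lt_asymm h h'
  · exact h.ne he'.symm
  · exact h'.ne he.symm
  · rcases lt_trichotomy x y with hxy | rfl | hxy
    · have := hag y hxy; omega
    · omega
    · have := hag' x hxy; omega

theorem lt_or_gt_of_ne {p q : ZPowRat α} (h : p ≠ q) : p ≺ q ∨ q ≺ p := by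
  rcases lt_trichotomy p.2 q.2 with h2 | h2 | h2
  · exact Or.inl (Or.inl h2)
  · obtain ⟨x, hx, hmax⟩ := exists_max_ne_of_ne fun h1 => h (Prod.ext h1 h2)
    rcases hx.lt_or_gt with hlt | hlt
    · exact Or.inl (Or.inr ⟨h2, x, hlt, hmax⟩)
    · exact Or.inr (Or.inr ⟨h2.symm, x, hlt, fun y hy => (hmax y hy).symm⟩)
  · exact Or.inr (Or.inl h2)

theorem AgreeOn.of_isBetween {P : Set α} {p q z : ZPowRat α} (hP : IsUpperSet P)
    (h : AgreeOn P p q) (hz : IsBetween (ZPowRatLT α) p q z) : AgreeOn P p z := by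
  obtain ⟨hzp, hqz⟩ := hz
  have h2 : p.2 = z.2 := by
    by_contra hne
    rcases Ne.lt_or_gt hne with hlt | hlt
    · exact hqz (Or.inl (h.1 ▸ hlt))
    · exact hzp (Or.inl hlt)
  refine ⟨h2, fun y hy => ?_⟩
  by_contra hne
  obtain ⟨x, hxP, hx, hmax⟩ := exists_max_ne ⟨y, hy, hne⟩
  have hag : ∀ w, x < w → p.1 w = z.1 w := fun w hw => hmax w (hP hw.le hxP) hw
  rcases hx.lt_or_gt with hlt | hlt
  · refine hqz (Or.inr ⟨h.1.symm.trans h2, x, h.2 x hxP ▸ hlt, fun w hw => ?_⟩)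
    exact (h.2 w (hP hw.le hxP)).symm.trans (hag w hw)
  · exact hzp (Or.inr ⟨h2.symm, x, hlt, fun w hw => (hag w hw).symm⟩)

theorem agreeOn_iff_eq_or_exists {P : Set α} (hP : IsUpperSet P) {p q : ZPowRat α} :
    AgreeOn P p q ↔ p = q ∨ ∃ y ∉ P, AgreeOn (Ioi y) p q := by
  constructor
  · intro h
    by_cases hpq : p = q
    · exact Or.inl hpq
    obtain ⟨x, hx, hmax⟩ := exists_max_ne_of_ne fun h1 => hpq (Prod.ext h1 h.1)
    exact Or.inr ⟨x, fun hxP => hx (h.2 x hxP), h.1, hmax⟩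
  · rintro (rfl | ⟨y, hy, h⟩)
    · exact AgreeOn.refl P p
    · exact h.mono fun z hz => lt_of_not_ge fun hzy => hy (hP hzy hz)

theorem agreeOn_Ici_iff {x : α} {p q : ZPowRat α} :
    AgreeOn (Ici x) p q ↔ AgreeOn (Ioi x) p q ∧ p.1 x = q.1 x := by
  refine ⟨fun h => ⟨h.mono Ioi_subset_Ici_self, h.2 x self_mem_Ici⟩, fun ⟨h, hx⟩ => ⟨h.1, ?_⟩⟩
  intro y hy
  rcases (mem_Ici.1 hy).eq_or_lt with rfl | hxy
  · exact hx
  · exact h.2 y hxy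

theorem lt_of_coord_lt {x : α} {p q : ZPowRat α} (h : AgreeOn (Ioi x) p q)
    (hx : p.1 x < q.1 x) : p ≺ q :=
  Or.inr ⟨h.1, x, hx, h.2⟩

theorem coord_le_of_not_lt {x : α} {p q : ZPowRat α} (h : AgreeOn (Ioi x) p q)
    (hqp : ¬ q ≺ p) : p.1 x ≤ q.1 x :=
  not_lt.1 fun hlt => hqp (lt_of_coord_lt h.symm hlt)

theorem coord_lt_of_not_lt {x : α} {p q : ZPowRat α} (h : AgreeOn (Ioi x) p q)
    (hn : ¬ AgreeOn (Ici x) p q) (hqp : ¬ q ≺ p) : p.1 x < q.1 x :=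
  (coord_le_of_not_lt h hqp).lt_of_ne fun hx => hn (agreeOn_Ici_iff.2 ⟨h, hx⟩)

theorem lt_of_agreeOn_of_not_agreeOn {x : α} {p q z : ZPowRat α} (hz : AgreeOn (Ioi x) p z)
    (hn : ¬ AgreeOn (Ioi x) p q) (hpq : p ≺ q) : z ≺ q := by
  have hzq : z ≠ q := by
    rintro rfl
    exact hn hz
  refine (lt_or_gt_of_ne hzq).resolve_right fun hqz => hn ?_
  exact hz.of_isBetween (isUpperSet_Ioi x) ⟨lt_asymm hpq, lt_asymm hqz⟩

noncomputable def setCoord (p : ZPowRat α) (x : α) (k : ℤ) : ZPowRat α :=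
  (p.1.update x k, p.2)

@[simp]
theorem setCoord_apply_self (p : ZPowRat α) (x : α) (k : ℤ) : (p.setCoord x k).1 x = k := by
  simp [setCoord]

theorem agreeOn_Ioi_setCoord (p : ZPowRat α) (x : α) (k : ℤ) :
    AgreeOn (Ioi x) p (p.setCoord x k) :=
  ⟨rfl, fun y hy => by simp [setCoord, Finsupp.update_apply, (ne_of_lt hy).symm]⟩

theorem not_finCondensed_of_lt {x : α} {p q : ZPowRat α} (hpq : p ≺ q)
    (hn : ¬ AgreeOn (Ioi x) p q) : ¬ FinCondensed (ZPowRatLT α) (AgreeOn (Ici x)) p q := by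
  set z : ℕ → ZPowRat α := fun k => p.setCoord x (p.1 x + k + 1)
  have hpz : ∀ k, p ≺ z k := fun k =>
    lt_of_coord_lt (agreeOn_Ioi_setCoord _ _ _) (by simp only [z, setCoord_apply_self]; omega)
  have hzq : ∀ k, z k ≺ q := fun k =>
    lt_of_agreeOn_of_not_agreeOn (agreeOn_Ioi_setCoord _ _ _) hn hpq
  refine not_finCondensed_of_pairwise (agreeOn_equivalence _) z
    (fun k => ⟨lt_asymm (hpz k), lt_asymm (hzq k)⟩) fun j k hjk h => hjk ?_
  have := h.2 x self_mem_Ici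
  simp only [z, setCoord_apply_self] at this
  omega

/-- Each `z` in between is `[x, ∞)`-close to `p` with its `x`-coordinate replaced by that of
`z`, which lies between the `x`-coordinates of `p` and `q`. -/
theorem finCondensed_of_agreeOn {x : α} {p q : ZPowRat α} (h : AgreeOn (Ioi x) p q) :
    FinCondensed (ZPowRatLT α) (AgreeOn (Ici x)) p q := by
  refine ⟨(Finset.Icc (min (p.1 x) (q.1 x)) (max (p.1 x) (q.1 x))).image (p.setCoord x),
    fun z hz => ?_⟩
  have hpz : AgreeOn (Ioi x) p z := by
    rcases hz with hz | hz
    · exact h.of_isBetween (isUpperSet_Ioi x) hz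
    · exact h.trans (h.symm.of_isBetween (isUpperSet_Ioi x) hz)
  have hzx : z.1 x ∈ Finset.Icc (min (p.1 x) (q.1 x)) (max (p.1 x) (q.1 x)) := by
    rw [Finset.mem_Icc]
    rcases hz with ⟨hzp, hqz⟩ | ⟨hzq, hpz'⟩
    · exact ⟨(min_le_left _ _).trans (coord_le_of_not_lt hpz hzp),
        (coord_le_of_not_lt (hpz.symm.trans h) hqz).trans (le_max_right _ _)⟩
    · exact ⟨(min_le_right _ _).trans (coord_le_of_not_lt (h.symm.trans hpz) hzq),
        (coord_le_of_not_lt hpz.symm hpz').trans (le_max_left _ _)⟩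
  refine ⟨p.setCoord x (z.1 x), Finset.mem_image_of_mem _ hzx, ?_⟩
  exact agreeOn_Ici_iff.2 ⟨hpz.symm.trans (agreeOn_Ioi_setCoord _ _ _), by simp⟩

theorem finCondensed_iff {x : α} {p q : ZPowRat α} :
    FinCondensed (ZPowRatLT α) (AgreeOn (Ici x)) p q ↔ AgreeOn (Ioi x) p q := by
  refine ⟨fun hfin => ?_, finCondensed_of_agreeOn⟩
  by_contra hn
  have hpq : p ≠ q := by
    rintro rfl
    exact hn (AgreeOn.refl _ p)
  rcases lt_or_gt_of_ne hpq with hpq | hqp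
  · exact not_finCondensed_of_lt hpq hn hfin
  · exact not_finCondensed_of_lt hqp (fun h => hn h.symm) hfin.symm

theorem isAutInvariant_agreeOn_Ioi_of_Ici {x : α}
    (h : IsAutInvariant (ZPowRatLT α) (AgreeOn (Ici x))) :
    IsAutInvariant (ZPowRatLT α) (AgreeOn (Ioi x)) := fun ψ p q hpq =>
  finCondensed_iff.1 (h.finCondensed ψ p q (finCondensed_iff.2 hpq))

theorem isAutInvariant_agreeOn_of_Ioi {P : Set α} (hP : IsUpperSet P)
    (h : ∀ y ∉ P, IsAutInvariant (ZPowRatLT α) (AgreeOn (Ioi y))) :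
    IsAutInvariant (ZPowRatLT α) (AgreeOn P) := by
  intro ψ p q hpq
  rw [agreeOn_iff_eq_or_exists hP] at hpq ⊢
  rcases hpq with rfl | ⟨y, hy, hpq⟩
  · exact Or.inl rfl
  · exact Or.inr ⟨y, hy, h y hy ψ p q hpq⟩

variable [WellFoundedLT α]

theorem isAutInvariant_agreeOn_Ioi (x : α) : IsAutInvariant (ZPowRatLT α) (AgreeOn (Ioi x)) := by
  induction x using WellFoundedLT.induction with
  | ind x ih =>
    exact isAutInvariant_agreeOn_Ioi_of_Ici <|
      isAutInvariant_agreeOn_of_Ioi (isUpperSet_Ici x) fun y hy => ih y (not_le.1 hy)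

theorem isAutInvariant_agreeOn {P : Set α} (hP : IsUpperSet P) :
    IsAutInvariant (ZPowRatLT α) (AgreeOn P) :=
  isAutInvariant_agreeOn_of_Ioi hP fun y _ => isAutInvariant_agreeOn_Ioi y

end ZPowRat

section Archimedean

variable {G : Type*} [Group G] [LinearOrder G]

theorem oabs_mem_iff {K : Subgroup G} {g : G} : oabs g ∈ K ↔ g ∈ K := by
  unfold oabs
  split_ifs
  · rfl
  · exact inv_mem_iff

theorem ArchEquiv.symm {g h : G} (he : ArchEquiv g h) : ArchEquiv h g :=
  let ⟨n, m, h1, h2⟩ := he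
  ⟨m, n, h2, h1⟩

theorem ArchLT.not_archEquiv {g h : G} (hgh : ArchLT g h) : ¬ ArchEquiv g h :=
  fun ⟨n, _, hn, _⟩ => (hgh n).not_ge hn

theorem ArchLT.not_archLT {g h : G} (hgh : ArchLT g h) : ¬ ArchLT h g := fun hhg => by
  have h1 := hgh 1
  have h2 := hhg 1
  rw [pow_one] at h1 h2
  exact _root_.lt_asymm h1 h2

variable [MulLeftMono G]

theorem one_le_oabs (g : G) : 1 ≤ oabs g := by
  unfold oabs
  split_ifs with h
  · exact h
  · exact Left.one_le_inv_iff.2 (not_le.1 h).le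

theorem oabs_pow (g : G) (n : ℕ) : oabs (g ^ n) = oabs g ^ n := by
  unfold oabs
  rcases le_or_gt 1 g with h | h
  · rw [if_pos h, if_pos (Left.one_le_pow_of_le h n)]
  · rw [if_neg (not_le.2 h), inv_pow]
    rcases (Left.pow_le_one_of_le h.le n).eq_or_lt with he | hlt
    · rw [if_pos he.ge, he, inv_one]
    · rw [if_neg (not_le.2 hlt)]

section ConvexSubgroup

variable {K : Subgroup G} (hK : (K : Set G).OrdConnected)
include hK

theorem mem_of_oabs_le {a b : G} (ha : a ∈ K) (hle : oabs b ≤ oabs a) : b ∈ K :=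
  oabs_mem_iff.1 (hK.out K.one_mem (oabs_mem_iff.2 ha) ⟨one_le_oabs b, hle⟩)

theorem archLT_of_mem_of_notMem {g h : G} (hg : g ∈ K) (hh : h ∉ K) : ArchLT g h :=
  fun n => lt_of_not_ge fun hle => hh (mem_of_oabs_le hK (K.pow_mem hg n) hle)

theorem mem_of_archLT {g h : G} (hh : h ∈ K) (hgh : ArchLT g h) : g ∈ K :=
  mem_of_oabs_le hK hh (by simpa using (hgh 1).le)

theorem mem_of_archEquiv {g h : G} (hg : g ∈ K) (he : ArchEquiv g h) : h ∈ K :=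
  let ⟨n, _, hn, _⟩ := he
  mem_of_oabs_le hK (K.pow_mem hg n) hn

end ConvexSubgroup

end Archimedean

namespace ZPowRat

variable {α : Type*} [LinearOrder α] [WellFoundedLT α] {G : Type*} [Group G] [LinearOrder G]
  [MulLeftMono G] (φ : ((· < ·) : G → G → Prop) ≃r ZPowRatLT α)

theorem agreeOn_mul_left {P : Set α} (hP : IsUpperSet P) (g : G) {a b : G}
    (h : AgreeOn P (φ a) (φ b)) : AgreeOn P (φ (g * a)) (φ (g * b)) := by
  simpa using isAutInvariant_agreeOn hP ((φ.symm.trans (OrderIso.mulLeft g).toRelIsoLT).trans φ)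
    _ _ h

def convexSubgroup (P : Set α) (hP : IsUpperSet P) : Subgroup G where
  carrier := {g | AgreeOn P (φ g) (φ 1)}
  one_mem' := AgreeOn.refl P _
  mul_mem' {a b} ha hb := by
    have := agreeOn_mul_left φ hP a hb
    rw [mul_one] at this
    exact this.trans ha
  inv_mem' {a} ha := by
    have := agreeOn_mul_left φ hP a⁻¹ ha
    rw [inv_mul_cancel, mul_one] at this
    exact this.symm

variable {P : Set α} (hP : IsUpperSet P)

theorem mem_convexSubgroup {g : G} : g ∈ convexSubgroup φ P hP ↔ AgreeOn P (φ g) (φ 1) :=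
  Iff.rfl

theorem agreeOn_iff_inv_mul_mem {a b : G} :
    AgreeOn P (φ a) (φ b) ↔ a⁻¹ * b ∈ convexSubgroup φ P hP := by
  refine ⟨fun h => ?_, fun h => ?_⟩
  · have := agreeOn_mul_left φ hP a⁻¹ h
    rw [inv_mul_cancel] at this
    exact this.symm
  · have := agreeOn_mul_left φ hP a h
    rw [mul_inv_cancel_left, mul_one] at this
    exact this.symm

theorem ordConnected_convexSubgroup : (convexSubgroup φ P hP : Set G).OrdConnected := by
  refine ⟨fun a ha b hb c hc => ?_⟩
  have hac : AgreeOn P (φ a) (φ c) := (ha.trans hb.symm).of_isBetween hP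
    ⟨fun h => hc.1.not_gt (φ.map_rel_iff.1 h), fun h => hc.2.not_gt (φ.map_rel_iff.1 h)⟩
  exact hac.symm.trans ha

theorem convexSubgroup_mono {Q : Set α} (hQ : IsUpperSet Q) (hQP : Q ⊆ P) :
    convexSubgroup φ P hP ≤ convexSubgroup φ Q hQ :=
  fun _ hg => AgreeOn.mono hg hQP

def IsLevel (g : G) (x : α) : Prop :=
  g ∈ convexSubgroup φ (Ioi x) (isUpperSet_Ioi x) ∧ g ∉ convexSubgroup φ (Ici x) (isUpperSet_Ici x)

noncomputable def bump (x : α) : G :=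
  φ.symm ((φ 1).setCoord x ((φ 1).1 x + 1))

theorem isLevel_bump (x : α) : IsLevel φ (bump φ x) x := by
  have h := agreeOn_Ioi_setCoord (φ 1) x ((φ 1).1 x + 1)
  refine ⟨by simpa [bump, mem_convexSubgroup] using h.symm, fun hx => ?_⟩
  have := (agreeOn_Ici_iff.1 hx).2
  simp [bump] at this

theorem exists_isLevel {g : G} (hg : g ∈ convexSubgroup φ ∅ isUpperSet_empty) (hne : g ≠ 1) :
    ∃ x, IsLevel φ g x := by
  obtain ⟨x, hx, hmax⟩ := exists_max_ne_of_ne fun h1 => hne (φ.injective (Prod.ext h1 hg.1))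
  exact ⟨x, ⟨hg.1, hmax⟩, fun h => hx (h.2 x self_mem_Ici)⟩

variable {φ}

theorem isLevel_oabs {g : G} {x : α} (hg : IsLevel φ g x) : IsLevel φ (oabs g) x :=
  ⟨oabs_mem_iff.2 hg.1, fun h => hg.2 (oabs_mem_iff.1 h)⟩

namespace IsLevel

variable {g h : G} {x y : α}

theorem ne_one (hg : IsLevel φ g x) : g ≠ 1 := fun h1 => hg.2 (h1 ▸ one_mem _)

theorem unique (hx : IsLevel φ g x) (hy : IsLevel φ g y) : x = y := by
  by_contra hne
  rcases Ne.lt_or_gt hne with hxy | hxy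
  · exact hy.2 (convexSubgroup_mono φ _ _ (Ici_subset_Ioi.2 hxy) hx.1)
  · exact hx.2 (convexSubgroup_mono φ _ _ (Ici_subset_Ioi.2 hxy) hy.1)

theorem of_archEquiv (hg : IsLevel φ g x) (he : ArchEquiv g h) : IsLevel φ h x :=
  ⟨mem_of_archEquiv (ordConnected_convexSubgroup φ _) hg.1 he,
    fun hh => hg.2 (mem_of_archEquiv (ordConnected_convexSubgroup φ _) hh he.symm)⟩

theorem archLT_of_lt (hg : IsLevel φ g x) (hh : IsLevel φ h y) (hxy : x < y) : ArchLT g h :=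
  archLT_of_mem_of_notMem (ordConnected_convexSubgroup φ (isUpperSet_Ici y))
    (convexSubgroup_mono φ _ _ (Ici_subset_Ioi.2 hxy) hg.1) hh.2

theorem coord_lt_mul (hg : IsLevel φ g x) (h1 : 1 ≤ g) (a : G) :
    (φ a).1 x < (φ (a * g)).1 x := by
  have hag : AgreeOn (Ioi x) (φ a) (φ (a * g)) :=
    (agreeOn_iff_inv_mul_mem φ _).2 (by simpa using hg.1)
  have hn : ¬ AgreeOn (Ici x) (φ a) (φ (a * g)) := fun h =>
    hg.2 (by simpa using (agreeOn_iff_inv_mul_mem φ _).1 h)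
  exact coord_lt_of_not_lt hag hn fun h => (φ.map_rel_iff.1 h).not_ge (le_mul_of_one_le_right' h1)

theorem coord_pow_ge (hg : IsLevel φ g x) (h1 : 1 ≤ g) (n : ℕ) :
    (φ 1).1 x + n ≤ (φ (g ^ n)).1 x := by
  induction n with
  | zero => simp
  | succ n ih =>
    have := hg.coord_lt_mul h1 (g ^ n)
    rw [← pow_succ] at this
    push_cast
    omega

theorem exists_oabs_le_pow (hg : IsLevel φ g x) (hh : IsLevel φ h x) :
    ∃ n : ℕ, oabs h ≤ oabs (g ^ n) := by
  obtain ⟨n, hn⟩ : ∃ n : ℕ, (φ (oabs h)).1 x < (φ 1).1 x + n :=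
    ⟨((φ (oabs h)).1 x - (φ 1).1 x).toNat + 1, by omega⟩
  have hle := (isLevel_oabs hg).coord_pow_ge (one_le_oabs g) n
  have hag : AgreeOn (Ioi x) (φ (oabs h)) (φ (oabs g ^ n)) :=
    (oabs_mem_iff.2 hh.1).trans (Subgroup.pow_mem _ (oabs_mem_iff.2 hg.1) n).symm
  refine ⟨n, ?_⟩
  rw [oabs_pow]
  exact (φ.map_rel_iff.1 (lt_of_coord_lt hag (by omega))).le

theorem archEquiv (hg : IsLevel φ g x) (hh : IsLevel φ h x) : ArchEquiv g h :=
  let ⟨n, hn⟩ := hg.exists_oabs_le_pow hh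
  let ⟨m, hm⟩ := hh.exists_oabs_le_pow hg
  ⟨n, m, hn, hm⟩

theorem lt_of_archLT (hg : IsLevel φ g x) (hh : IsLevel φ h y) (hgh : ArchLT g h) : x < y := by
  rcases lt_trichotomy x y with hxy | rfl | hxy
  · exact hxy
  · exact absurd (hg.archEquiv hh) hgh.not_archEquiv
  · exact absurd (hh.archLT_of_lt hg hxy) hgh.not_archLT

end IsLevel

theorem isLevel_iff_of_mk_eq {g h : {g : G // g ≠ 1}}
    (he : (Quot.mk _ g : NzArchClasses G) = Quot.mk _ h) {x : α} :
    IsLevel φ g.1 x ↔ IsLevel φ h.1 x := by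
  have := Quot.eqvGen_exact he
  clear he
  induction this with
  | rel g h he => exact ⟨fun hg => hg.of_archEquiv he, fun hh => hh.of_archEquiv he.symm⟩
  | refl => rfl
  | symm _ _ _ ih => exact ih.symm
  | trans _ _ _ _ _ ih ih' => exact ih.trans ih'

variable (φ)

noncomputable def levelClass (x : α) : NzArchClasses G :=
  Quot.mk _ ⟨bump φ x, (isLevel_bump φ x).ne_one⟩

theorem mk_eq_levelClass {g : {g : G // g ≠ 1}} {x : α} (hg : IsLevel φ g.1 x) :
    Quot.mk _ g = levelClass φ x :=
  Quot.sound (hg.archEquiv (isLevel_bump φ x))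

theorem isLevel_of_mk_eq_levelClass {g : {g : G // g ≠ 1}} {x : α}
    (h : Quot.mk _ g = levelClass φ x) : IsLevel φ g.1 x :=
  (isLevel_iff_of_mk_eq h).2 (isLevel_bump φ x)

theorem levelClass_injective : Function.Injective (levelClass φ) := fun x _ h =>
  (isLevel_bump φ x).unique (isLevel_of_mk_eq_levelClass φ h)

theorem nzArchClassLT_levelClass_iff {x y : α} :
    NzArchClassLT (levelClass φ x) (levelClass φ y) ↔ x < y := by
  refine ⟨fun ⟨g, h, hg, hh, hgh⟩ => ?_, fun hxy =>
    ⟨_, _, rfl, rfl, (isLevel_bump φ x).archLT_of_lt (isLevel_bump φ y) hxy⟩⟩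
  exact (isLevel_of_mk_eq_levelClass φ hg.symm).lt_of_archLT
    (isLevel_of_mk_eq_levelClass φ hh.symm) hgh

theorem exists_levelClass_eq_of_nzArchClassLT {b : NzArchClasses G} {x : α}
    (hb : NzArchClassLT b (levelClass φ x)) : ∃ y, levelClass φ y = b := by
  obtain ⟨g, h, rfl, hh, hgh⟩ := hb
  have hg : g.1 ∈ convexSubgroup φ (Ioi x) (isUpperSet_Ioi x) :=
    mem_of_archLT (ordConnected_convexSubgroup φ _) (isLevel_of_mk_eq_levelClass φ hh.symm).1 hgh
  obtain ⟨y, hy⟩ :=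
    exists_isLevel φ (convexSubgroup_mono φ _ isUpperSet_empty (empty_subset _) hg) g.2
  exact ⟨y, (mk_eq_levelClass φ hy).symm⟩

end ZPowRat

theorem archClasses_initialSegment_of_orderType_zpow_rat_general
    {α : Type*} [LinearOrder α] [WellFoundedLT α]
    {G : Type*} [Group G] [LinearOrder G]
    [CovariantClass G G (· * ·) (· ≤ ·)]
    (hiso : Nonempty (((· < ·) : G → G → Prop) ≃r
      ProdDomLT (FinsuppLT ((· < ·) : α → α → Prop)) ((· < ·) : ℚ → ℚ → Prop))) :
    ∃ S : Set (NzArchClasses G),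
      (∀ a ∈ S, ∀ b : NzArchClasses G, NzArchClassLT b a → b ∈ S) ∧
      Nonempty (Subrel (NzArchClassLT (G := G)) S ≃r ((· < ·) : α → α → Prop)) := by
  obtain ⟨φ⟩ := hiso
  let e : ((· < ·) : α → α → Prop) ↪r NzArchClassLT (G := G) :=
    ⟨⟨ZPowRat.levelClass φ, ZPowRat.levelClass_injective φ⟩,
      ZPowRat.nzArchClassLT_levelClass_iff φ⟩
  refine ⟨range e, ?_, ⟨(RelIso.ofSurjective (e.codRestrict _ mem_range_self) ?_).symm⟩⟩
  · rintro _ ⟨x, rfl⟩ b hb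
    exact ZPowRat.exists_levelClass_eq_of_nzArchClassLT φ hb
  · rintro ⟨_, x, rfl⟩
    exact ⟨x, rfl⟩

/-- If a countable linearly ordered group `G` has order type `ℤ^α·ℚ` (ℚ-coordinate
dominant) for a well-order `α`, then there is a downward closed set `S` of Archimedean
classes of non-identity elements of `G` such that `S`, ordered by `≪`, is order
isomorphic to `α`. -/
theorem archClasses_initialSegment_of_orderType_zpow_rat
    {α : Type*} [LinearOrder α] [WellFoundedLT α]
    {G : Type*} [Group G] [LinearOrder G] [Countable G]
    [CovariantClass G G (· * ·) (· ≤ ·)]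
    [CovariantClass G G (Function.swap (· * ·)) (· ≤ ·)]
    (hiso : Nonempty (((· < ·) : G → G → Prop) ≃r
      ProdDomLT (FinsuppLT ((· < ·) : α → α → Prop)) ((· < ·) : ℚ → ℚ → Prop))) :
    ∃ S : Set (NzArchClasses G),
      (∀ a ∈ S, ∀ b : NzArchClasses G, NzArchClassLT b a → b ∈ S) ∧
      Nonempty (Subrel (NzArchClassLT (G := G)) S ≃r ((· < ·) : α → α → Prop)) :=
  archClasses_initialSegment_of_orderType_zpow_rat_general hiso
end

section
/- Let X be a linear order and consider the standard linearly ordered abelian group ℤ^X (finitely supported functions from X to ℤ with pointwise addition and the maximum-disagreement order). For nonzero f, g ∈ ℤ^X: f is Archimedean less than g if and only if the maximum of the support of f is strictly less than the maximum of the support of g, and f is Archimedean equivalent to g if and only if the maxima of their supports are equal. -/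
attribute [local instance] Classical.propDecidable

/-- The strict order on `ℤ^X` for a linear order `X`. -/
def ZLT {X : Type*} [LinearOrder X] (f g : X →₀ ℤ) : Prop :=
  FinsuppLT ((· < ·) : X → X → Prop) f g

/-- The corresponding non-strict order on `ℤ^X`. -/
def ZLE {X : Type*} [LinearOrder X] (f g : X →₀ ℤ) : Prop :=
  ZLT f g ∨ f = g

/-- `|f| = f` if `f ≥ 0` and `|f| = -f` otherwise, in `ℤ^X`. -/
noncomputable def zabs {X : Type*} [LinearOrder X] (f : X →₀ ℤ) : X →₀ ℤ :=
  if ZLE 0 f then f else -f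

/-- `f` is Archimedean less than `g` in `ℤ^X`: `|n·f| < |g|` for every natural `n`. -/
def ZArchLT {X : Type*} [LinearOrder X] (f g : X →₀ ℤ) : Prop :=
  ∀ n : ℕ, ZLT (zabs (n • f)) (zabs g)

/-- `f` and `g` are Archimedean equivalent in `ℤ^X`: there are `n, m` with
`|n·f| ≥ |g|` and `|m·g| ≥ |f|`. -/
def ZArchEquiv {X : Type*} [LinearOrder X] (f g : X →₀ ℤ) : Prop :=
  ∃ n m : ℕ, ZLE (zabs g) (zabs (n • f)) ∧ ZLE (zabs f) (zabs (m • g))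

/-!
Two elements of `ℤ^X` that vanish above a point `p` compare as their values at `p` do, when these
differ. The absolute value `|h|` has the same support as `h` and is positive at its top point,
where its value is `|h p|`; scaling by `n ≠ 0` keeps the support. Hence if the top point of `supp f`
lies below that of `supp g`, every `|n • f|` is below `|g|`, while otherwise `|n • f|` overtakes
`|g|` as soon as `n` exceeds `|g p|`, where `p` is the top point of `supp f`.
-/

namespace Finsupp

variable {X M : Type*} [LinearOrder X] [Zero M]

theorem apply_eq_zero_of_support_max_le {h : X →₀ M} {p y : X} (hp : h.support.max ≤ p)
    (hy : p < y) : h y = 0 :=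
  notMem_support_iff.mp fun hmem =>
    (hy.trans_le (WithBot.coe_le_coe.mp ((Finset.le_max hmem).trans hp))).false

theorem apply_ne_zero_of_support_max_eq {h : X →₀ M} {p : X} (hp : h.support.max = p) :
    h p ≠ 0 :=
  mem_support_iff.mp (Finset.mem_of_max hp)

end Finsupp

section

variable {X : Type*} [LinearOrder X] {a b h : X →₀ ℤ} {p : X}

open Finsupp

theorem zlt_irrefl (a : X →₀ ℤ) : ¬ ZLT a a := fun ⟨_, hx, _⟩ => hx.false

theorem zlt_asymm (hab : ZLT a b) : ¬ ZLT b a := by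
  obtain ⟨x, hx, hx_above⟩ := hab
  rintro ⟨y, hy, hy_above⟩
  rcases lt_trichotomy x y with hxy | rfl | hxy
  · exact (hx_above y hxy ▸ hy).false
  · exact (hx.trans hy).false
  · exact (hy_above x hxy ▸ hx).false

theorem not_zle_of_zlt (hab : ZLT a b) : ¬ ZLE b a := by
  rintro (hba | rfl)
  · exact zlt_asymm hab hba
  · exact zlt_irrefl b hab

theorem zlt_of_apply_lt (ha : a.support.max ≤ p) (hb : b.support.max ≤ p) (hab : a p < b p) :
    ZLT a b :=
  ⟨p, hab, fun _ hy => by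
    rw [apply_eq_zero_of_support_max_le ha hy, apply_eq_zero_of_support_max_le hb hy]⟩

theorem zero_zlt_iff (hp : h.support.max = p) : ZLT 0 h ↔ 0 < h p := by
  refine ⟨fun ⟨x, hx, hx_above⟩ => ?_, zlt_of_apply_lt (a := 0) (by simp) hp.le⟩
  have hxp : x ≤ p := WithBot.coe_le_coe.mp <| hp ▸ Finset.le_max (mem_support_iff.mpr hx.ne')
  rcases hxp.lt_or_eq with hxp | rfl
  · exact absurd (hx_above p hxp).symm (apply_ne_zero_of_support_max_eq hp)
  · exact hx

theorem zabs_eq_or_eq_neg (h : X →₀ ℤ) : zabs h = h ∨ zabs h = -h := by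
  unfold zabs
  split_ifs
  exacts [Or.inl rfl, Or.inr rfl]

theorem support_zabs (h : X →₀ ℤ) : (zabs h).support = h.support := by
  rcases zabs_eq_or_eq_neg h with hh | hh <;> simp [hh]

theorem zabs_apply_pos (hp : h.support.max = p) : 0 < zabs h p := by
  have hhp := apply_ne_zero_of_support_max_eq hp
  unfold zabs
  split_ifs with h0
  · rcases h0 with h0 | rfl
    · exact (zero_zlt_iff hp).mp h0
    · exact absurd rfl hhp
  · have hnonpos : h p ≤ 0 := not_lt.mp fun hpos => h0 (Or.inl ((zero_zlt_iff hp).mpr hpos))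
    simpa using hnonpos.lt_of_ne hhp

theorem zabs_apply_eq_abs (hp : h.support.max = p) : zabs h p = |h p| := by
  have hpos := zabs_apply_pos hp
  rcases zabs_eq_or_eq_neg h with hh | hh <;> rw [hh] at hpos ⊢
  · exact (abs_of_pos hpos).symm
  · simp only [coe_neg, Pi.neg_apply, neg_pos] at hpos ⊢
    exact (abs_of_neg hpos).symm

theorem zabs_apply_le_abs (h : X →₀ ℤ) (x : X) : zabs h x ≤ |h x| := by
  rcases zabs_eq_or_eq_neg h with hh | hh <;> rw [hh]
  · exact le_abs_self _
  · exact neg_le_abs _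

theorem zarchLT_of_support_max_lt {f g : X →₀ ℤ} (hfg : f.support.max < g.support.max) :
    ZArchLT f g := by
  obtain ⟨q, hq⟩ := WithBot.ne_bot_iff_exists.mp (ne_bot_of_gt hfg)
  rw [← hq] at hfg
  intro n
  have hnf : (zabs (n • f)).support.max < q := by
    rw [support_zabs]
    exact (Finset.max_mono support_smul).trans_lt hfg
  refine zlt_of_apply_lt hnf.le (by rw [support_zabs, hq]) ?_
  rw [notMem_support_iff.mp (Finset.notMem_of_max_lt_coe hnf)]
  exact zabs_apply_pos hq.symm

theorem exists_zlt_zabs_nsmul {f g : X →₀ ℤ} (hf : f ≠ 0) (hgf : g.support.max ≤ f.support.max) :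
    ∃ n : ℕ, ZLT (zabs g) (zabs (n • f)) := by
  obtain ⟨p, hp⟩ := Finset.max_of_nonempty (support_nonempty_iff.mpr hf)
  set n := (g p).natAbs + 1
  have hnf : (n • f).support.max = p := by rw [support_smul_eq (Nat.succ_ne_zero _), hp]
  refine ⟨n, zlt_of_apply_lt (by rwa [support_zabs, ← hp]) (by rw [support_zabs, hnf]) ?_⟩
  have hfp : 1 ≤ |f p| := Int.one_le_abs (apply_ne_zero_of_support_max_eq hp)
  calc zabs g p ≤ |g p| := zabs_apply_le_abs g p
    _ < n := by rw [Int.abs_eq_natAbs]; omega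
    _ ≤ n * |f p| := le_mul_of_one_le_right n.cast_nonneg hfp
    _ = zabs (n • f) p := by
      rw [zabs_apply_eq_abs hnf, Finsupp.smul_apply, nsmul_eq_mul, abs_mul, Nat.abs_cast]

theorem zarchLT_iff_support_max_lt {f g : X →₀ ℤ} (hf : f ≠ 0) :
    ZArchLT f g ↔ f.support.max < g.support.max := by
  refine ⟨fun hfg => ?_, zarchLT_of_support_max_lt⟩
  by_contra! hgf
  obtain ⟨n, hn⟩ := exists_zlt_zabs_nsmul hf hgf
  exact zlt_asymm hn (hfg n)

theorem zarchEquiv_iff_support_max_eq {f g : X →₀ ℤ} (hf : f ≠ 0) (hg : g ≠ 0) :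
    ZArchEquiv f g ↔ f.support.max = g.support.max := by
  constructor
  · rintro ⟨n, m, hgf, hfg⟩
    refine le_antisymm (not_lt.mp fun hlt => ?_) (not_lt.mp fun hlt => ?_)
    · exact not_zle_of_zlt (zarchLT_of_support_max_lt hlt m) hfg
    · exact not_zle_of_zlt (zarchLT_of_support_max_lt hlt n) hgf
  · intro heq
    obtain ⟨n, hn⟩ := exists_zlt_zabs_nsmul hf heq.ge
    obtain ⟨m, hm⟩ := exists_zlt_zabs_nsmul hg heq.le
    exact ⟨n, m, Or.inl hn, Or.inl hm⟩

end

/-- In the standard ordered abelian group `ℤ^X`, for nonzero `f, g`: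
`f ≪ g` iff `max (supp f) < max (supp g)`, and `f ≈ g` iff
`max (supp f) = max (supp g)`. -/
theorem zpow_archLT_iff_max_support_lt
    {X : Type*} [LinearOrder X] (f g : X →₀ ℤ) (hf : f ≠ 0) (hg : g ≠ 0) :
    (ZArchLT f g ↔
      f.support.max' (Finsupp.support_nonempty_iff.mpr hf) <
        g.support.max' (Finsupp.support_nonempty_iff.mpr hg)) ∧
    (ZArchEquiv f g ↔
      f.support.max' (Finsupp.support_nonempty_iff.mpr hf) =
        g.support.max' (Finsupp.support_nonempty_iff.mpr hg)) := by
  rw [← WithBot.coe_lt_coe, ← WithBot.coe_inj, Finset.coe_max', Finset.coe_max']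
  exact ⟨zarchLT_iff_support_max_lt hf, zarchEquiv_iff_support_max_eq hf hg⟩
end

section
/- Let X be a linear order such that ℚ order-embeds into X. Then ℚ order-embeds into ℤ^X (the finitely supported functions from X to ℤ with the maximum-disagreement order). -/
theorem finsuppLT_single_single_iff {X : Type*} [LinearOrder X] {n : ℤ} (hn : 0 < n)
    {x y : X} :
    FinsuppLT (· < ·) (Finsupp.single x n) (Finsupp.single y n) ↔ x < y := by
  constructor
  · rintro ⟨z, hz, hagree⟩
    have hyx : y ≠ x := by
      rintro rfl
      exact lt_irrefl _ hz
    have hxz : x < z := by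
      by_contra! hzx
      rcases hzx.lt_or_eq with hzx | rfl
      · have hx := hagree x hzx
        simp [hyx] at hx
        omega
      · simp [hyx] at hz
        omega
    have hyz : y = z := by
      by_contra hyz
      simp [hxz.ne, hyz] at hz
    exact hyz ▸ hxz
  · intro hxy
    refine ⟨y, by simpa [Finsupp.single_apply, hxy.ne] using hn, fun w hyw => ?_⟩
    simp [(hxy.trans hyw).ne, hyw.ne]

/-- If `ℚ` order-embeds into a linear order `X`, then `ℚ` order-embeds into `ℤ^X`
(finitely supported functions `X → ℤ` with the maximum-disagreement order). -/
theorem rat_embeds_zpow_of_rat_embeds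
    {X : Type*} [LinearOrder X]
    (h : ∃ f : ℚ → X, ∀ a b : ℚ, a < b ↔ f a < f b) :
    ∃ g : ℚ → (X →₀ ℤ),
      ∀ a b : ℚ, a < b ↔ FinsuppLT ((· < ·) : X → X → Prop) (g a) (g b) := by
  obtain ⟨f, hf⟩ := h
  exact ⟨fun q => Finsupp.single (f q) 1, fun a b =>
    (hf a b).trans (finsuppLT_single_single_iff one_pos).symm⟩
end
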